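/- arXiv:2311.08343 — 4 statements merged into one kernel-verified Lean document; each statement's English description precedes it below -/
import Mathlib

section
/- Let N ≥ 1. Define S(A) = Σ_{k≥1} |Tr(A^k)|²/k² for a unitary matrix A. Then the distribution of the random variable S(A) when A is Haar-distributed on U(N) is the same as the distribution of S(A) when A is Haar-distributed on the special unitary group SU(N): for every x ≥ 0, the Haar measure of {A ∈ U(N) : S(A) ≤ x} equals the Haar measure of {A ∈ SU(N) : S(A) ≤ x}. -/
/-!
Let `T = {S ≤ x}` and integrate `1_T(g h)` against `μ ⊗ ν` in both orders. For fixed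
`h ∈ SU(N)`, `S(g h) = S(h g)` (cyclicity of the trace), so left invariance of `μ` makes the
inner integral `μ T`. For fixed `g ∈ U(N)`, a scalar `z` of modulus one with `z g ∈ SU(N)`
(an `N`-th root of `(det g)⁻¹`) does not change `S(g h)`, so left invariance of `ν` under
`z g` makes the inner integral `ν T`.
-/

open MeasureTheory ProbabilityTheory Matrix

noncomputable section

instance matrixMeasurableSpace {m n α : Type*} [MeasurableSpace α] :
    MeasurableSpace (Matrix m n α) :=
  show MeasurableSpace (m → n → α) from inferInstance

/-- `S(A) = Σ_{k ≥ 1} |Tr(A^k)|² / k²` for a complex matrix `A`. -/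
def S (N : ℕ) (A : Matrix (Fin N) (Fin N) ℂ) : ℝ :=
  ∑' k : ℕ, ‖(A ^ (k + 1)).trace‖ ^ 2 / ((k : ℝ) + 1) ^ 2

instance Matrix.borelSpace {m n α : Type*} [Finite m] [Finite n] [TopologicalSpace α]
    [MeasurableSpace α] [BorelSpace α] [SecondCountableTopology α] :
    BorelSpace (Matrix m n α) :=
  inferInstanceAs (BorelSpace (m → n → α))

instance Matrix.secondCountableTopology {m n α : Type*} [Finite m] [Finite n]
    [TopologicalSpace α] [SecondCountableTopology α] :
    SecondCountableTopology (Matrix m n α) :=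
  inferInstanceAs (SecondCountableTopology (m → n → α))

theorem MeasureTheory.measure_eq_of_ae_measure_preimage_mul {G : Type*} [MeasurableSpace G]
    [Mul G] [MeasurableMul₂ G] {μ ν : Measure G} [IsProbabilityMeasure μ]
    [IsProbabilityMeasure ν] {T : Set G} (hT : MeasurableSet T)
    (hν : ∀ᵐ g ∂μ, ν ((g * ·) ⁻¹' T) = ν T) (hμ : ∀ᵐ h ∂ν, μ ((· * h) ⁻¹' T) = μ T) :
    μ T = ν T := by
  have hM : MeasurableSet ((fun p : G × G => p.1 * p.2) ⁻¹' T) := measurable_mul hT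
  calc μ T = ∫⁻ h, μ ((· * h) ⁻¹' T) ∂ν := by simp [lintegral_congr_ae hμ]
    _ = μ.prod ν ((fun p : G × G => p.1 * p.2) ⁻¹' T) := (Measure.prod_apply_symm hM).symm
    _ = ∫⁻ g, ν ((g * ·) ⁻¹' T) ∂μ := Measure.prod_apply hM
    _ = ν T := by simp [lintegral_congr_ae hν]

namespace Matrix

variable {n : Type*} [Fintype n] [DecidableEq n]

theorem trace_mul_pow_comm {R : Type*} [CommSemiring R] (A B : Matrix n n R) :
    ∀ k : ℕ, trace ((A * B) ^ k) = trace ((B * A) ^ k)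
  | 0 => by simp
  | k + 1 => by
    rw [pow_succ, ← mul_assoc, trace_mul_comm, mul_pow_mul, ← mul_assoc, ← pow_succ']

theorem measurableSet_unitaryGroup :
    MeasurableSet (unitaryGroup n ℂ : Set (Matrix n n ℂ)) :=
  isClosed_unitary.measurableSet

theorem measurableSet_specialUnitaryGroup :
    MeasurableSet (specialUnitaryGroup n ℂ : Set (Matrix n n ℂ)) :=
  (isClosed_unitary.inter (isClosed_singleton.preimage continuous_id.matrix_det)).measurableSet

theorem exists_norm_eq_one_smul_mem_specialUnitaryGroup {A : Matrix n n ℂ}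
    (hA : A ∈ unitaryGroup n ℂ) :
    ∃ z : ℂ, ‖z‖ = 1 ∧ z • A ∈ specialUnitaryGroup n ℂ := by
  have hdet : ‖A.det‖ = 1 := CStarRing.norm_of_mem_unitary (det_of_mem_unitary hA)
  obtain ⟨z, hz, hzdet⟩ : ∃ z : ℂ, ‖z‖ = 1 ∧ z ^ Fintype.card n * A.det = 1 := by
    rcases (Fintype.card n).eq_zero_or_pos with hn | hn
    · have := Fintype.card_eq_zero_iff.1 hn
      exact ⟨1, norm_one, by simp⟩
    · obtain ⟨z, hz⟩ := IsAlgClosed.exists_pow_nat_eq A.det⁻¹ hn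
      refine ⟨z, ?_, ?_⟩
      · rw [← pow_left_inj₀ (norm_nonneg z) zero_le_one hn.ne', ← norm_pow, hz, norm_inv, hdet]
        simp
      · rw [hz, inv_mul_cancel₀ (norm_ne_zero_iff.1 (by simp [hdet]))]
  have hzU : z ∈ unitary ℂ := Unitary.mem_iff_star_mul_self.2 (by simp [Complex.conj_mul', hz])
  exact ⟨z, hz, mem_specialUnitaryGroup_iff.2
    ⟨Unitary.smul_mem_of_mem hzU hA, by rw [det_smul, hzdet]⟩⟩

theorem map_unitary_eq_map_specialUnitary {β : Type*} [MeasurableSpace β]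
    {f : Matrix n n ℂ → β} (hf : Measurable f)
    (hf_smul : ∀ z : ℂ, ‖z‖ = 1 → ∀ A, f (z • A) = f A) (hf_comm : ∀ A B, f (A * B) = f (B * A))
    {μ ν : Measure (Matrix n n ℂ)} [IsProbabilityMeasure μ] [IsProbabilityMeasure ν]
    (hμsupp : μ (unitaryGroup n ℂ) = 1) (hμinv : ∀ g ∈ unitaryGroup n ℂ, μ.map (g * ·) = μ)
    (hνsupp : ν (specialUnitaryGroup n ℂ) = 1)
    (hνinv : ∀ g ∈ specialUnitaryGroup n ℂ, ν.map (g * ·) = ν) :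
    μ.map f = ν.map f := by
  ext I hI
  have hT : MeasurableSet (f ⁻¹' I) := hf hI
  rw [Measure.map_apply hf hI, Measure.map_apply hf hI]
  refine measure_eq_of_ae_measure_preimage_mul hT ?_ ?_
  · filter_upwards [(mem_ae_iff_prob_eq_one measurableSet_unitaryGroup).2 hμsupp] with g hg
    obtain ⟨z, hz, hzg⟩ := exists_norm_eq_one_smul_mem_specialUnitaryGroup hg
    have hpre : (g * ·) ⁻¹' (f ⁻¹' I) = (z • g * ·) ⁻¹' (f ⁻¹' I) := by
      ext h; simp [hf_smul z hz]
    rw [hpre, ← Measure.map_apply (measurable_const_mul _) hT, hνinv _ hzg]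
  · filter_upwards [(mem_ae_iff_prob_eq_one measurableSet_specialUnitaryGroup).2 hνsupp] with h hh
    have hpre : (· * h) ⁻¹' (f ⁻¹' I) = (h * ·) ⁻¹' (f ⁻¹' I) := by ext g; simp [hf_comm g h]
    rw [hpre, ← Measure.map_apply (measurable_const_mul _) hT,
      hμinv _ (specialUnitaryGroup_le_unitaryGroup hh)]

end Matrix

theorem measurable_S (N : ℕ) : Measurable (S N) :=
  Measurable.tsum fun k =>
    ((continuous_pow (k + 1)).matrix_trace.norm.pow 2).measurable.div_const _

theorem S_smul_of_norm_eq_one {N : ℕ} {z : ℂ} (hz : ‖z‖ = 1) (A : Matrix (Fin N) (Fin N) ℂ) :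
    S N (z • A) = S N A := by
  simp only [S, smul_pow, trace_smul, norm_smul, norm_pow, hz, one_pow, one_mul]

theorem S_mul_comm {N : ℕ} (A B : Matrix (Fin N) (Fin N) ℂ) : S N (A * B) = S N (B * A) := by
  simp only [S, trace_mul_pow_comm A B]

theorem traceSum_distribution_unitary_eq_specialUnitary_general
    (N : ℕ)
    (μ ν : Measure (Matrix (Fin N) (Fin N) ℂ))
    [IsProbabilityMeasure μ] [IsProbabilityMeasure ν]
    (hμsupp : μ {A | A ∈ Matrix.unitaryGroup (Fin N) ℂ} = 1)
    (hμinv : ∀ g ∈ Matrix.unitaryGroup (Fin N) ℂ, μ.map (fun A => g * A) = μ)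
    (hνsupp : ν {A | A ∈ Matrix.specialUnitaryGroup (Fin N) ℂ} = 1)
    (hνinv : ∀ g ∈ Matrix.specialUnitaryGroup (Fin N) ℂ, ν.map (fun A => g * A) = ν) :
    ∀ (x : ℝ), 0 ≤ x → μ {A | S N A ≤ x} = ν {A | S N A ≤ x} := by
  intro x _
  have hS := map_unitary_eq_map_specialUnitary (measurable_S N)
    (fun _ hz => S_smul_of_norm_eq_one hz) S_mul_comm hμsupp hμinv hνsupp hνinv
  have hIic := congrArg (· (Set.Iic x)) hS
  rwa [Measure.map_apply (measurable_S N) measurableSet_Iic,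
    Measure.map_apply (measurable_S N) measurableSet_Iic] at hIic

/-- The distribution of `S(A) = Σ_{k≥1} |Tr(A^k)|²/k²` is the same when `A` is Haar-distributed
on `U(N)` as when `A` is Haar-distributed on `SU(N)`. -/
theorem traceSum_distribution_unitary_eq_specialUnitary
    (N : ℕ) (hN : 1 ≤ N)
    (μ ν : Measure (Matrix (Fin N) (Fin N) ℂ))
    [IsProbabilityMeasure μ] [IsProbabilityMeasure ν]
    (hμsupp : μ {A | A ∈ Matrix.unitaryGroup (Fin N) ℂ} = 1)
    (hμinv : ∀ g ∈ Matrix.unitaryGroup (Fin N) ℂ, μ.map (fun A => g * A) = μ)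
    (hνsupp : ν {A | A ∈ Matrix.specialUnitaryGroup (Fin N) ℂ} = 1)
    (hνinv : ∀ g ∈ Matrix.specialUnitaryGroup (Fin N) ℂ, ν.map (fun A => g * A) = ν) :
    ∀ (x : ℝ), 0 ≤ x → μ {A | S N A ≤ x} = ν {A | S N A ≤ x} :=
  traceSum_distribution_unitary_eq_specialUnitary_general N μ ν hμsupp hμinv hνsupp hνinv
end
end

section
/- Let N ≥ 1 and define K(x,y) = 2 Σ_{j=0}^{N−1} sin(((2j+1)/2)x)·sin(((2j+1)/2)y). Let ε(a) = 1 if a is odd and 1 ≤ a ≤ 2N−1, and ε(a) = 0 otherwise. Then for all integers k, ℓ ≥ 1: (1/π) ∫₀^π K(x,x) cos(kx) dx = −ε(k)/2; if k = ℓ then (1/π²) ∫₀^π ∫₀^π K(x,y)² cos(kx) cos(ℓy) dx dy = (2N − k)⁺/4; and if k ≠ ℓ then (1/π²) ∫₀^π ∫₀^π K(x,y)² cos(kx) cos(ℓy) dx dy = −ε(k+ℓ)/2, where x⁺ = max{x, 0}. -/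
/-!
Write `s_j(x) = sin((j + 1/2) x)` (`halfSin j x`). Since
`2 s_j s_i = cos((j - i) x) - cos((j + i + 1) x)`, orthogonality of the cosines on `[0, π]` gives
`∫₀^π s_j s_i cos(m x) dx = (π/4) c_{ji}(m)` for `m ≥ 1`, where
`c_{ji}(m) = [|j - i| = m] - [j + i + 1 = m]` (`halfSinCosCoeff (j, i) m`). Expanding `K(x,x)` and
`K(x,y)² = 4 Σ_{j,i} s_j(x) s_i(x) s_j(y) s_i(y)` turns the integrals into
`-(π/2) #{j < N | 2j + 1 = k}` and `(π²/4) Σ_{j,i<N} c_{ji}(k) c_{ji}(ℓ)`. For `k = ℓ` the lines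
`|j - i| = k` and `j + i + 1 = k` are disjoint and together meet `[0, N)²` in `(2N - k)⁺` points;
for `k ≠ ℓ` only the points where a line `|j - i| = k` crosses `j + i + 1 = ℓ` (or vice versa)
contribute, and there are two of them in `[0, N)²` exactly when `k + ℓ` is odd and `k + ℓ < 2N`.
-/

noncomputable section

/-- The kernel `K(x,y) = 2 Σ_{j=0}^{N−1} sin(((2j+1)/2)x)·sin(((2j+1)/2)y)`. -/
def K (N : ℕ) (x y : ℝ) : ℝ :=
  2 * ∑ j ∈ Finset.range N,
    Real.sin ((2 * (j : ℝ) + 1) / 2 * x) * Real.sin ((2 * (j : ℝ) + 1) / 2 * y)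

/-- `ε(a) = 1` if `a` is odd and `1 ≤ a ≤ 2N−1`, and `ε(a) = 0` otherwise. -/
def eps (N a : ℕ) : ℝ :=
  if Odd a ∧ 1 ≤ a ∧ a ≤ 2 * N - 1 then 1 else 0

open Real Finset

theorem Finset.sum_boole_of_imp_eq {α R : Type*} [DecidableEq α] [AddCommMonoidWithOne R]
    (s : Finset α) {P : α → Prop} [DecidablePred P] {a : α} (h : ∀ x, P x → x = a) :
    ∑ x ∈ s, (if P x then (1 : R) else 0) = if a ∈ s ∧ P a then 1 else 0 := by
  have hP (x : α) : P x ↔ x = a ∧ P a :=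
    ⟨fun hx => ⟨h x hx, h x hx ▸ hx⟩, fun ⟨e, ha⟩ => e ▸ ha⟩
  rw [sum_congr rfl fun x _ => if_congr (hP x) rfl rfl]
  simp only [ite_and, sum_ite_eq']

theorem Finset.sum_range_boole_le_and_lt {R : Type*} [AddCommMonoidWithOne R] (N a b : ℕ) :
    ∑ j ∈ range N, (if a ≤ j ∧ j < b then (1 : R) else 0) = (min b N - a : ℕ) := by
  rw [sum_boole, show {j ∈ range N | a ≤ j ∧ j < b} = Ico a (min b N) by ext; simp; omega,
    Nat.card_Ico]

section LatticeCounts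

variable {R : Type*} [AddCommMonoidWithOne R]

theorem sum_range_product_boole_fst_eq_add (N k : ℕ) :
    ∑ p ∈ range N ×ˢ range N, (if p.1 = p.2 + k then (1 : R) else 0) = (N - k : ℕ) := by
  rw [sum_product_right]
  calc ∑ i ∈ range N, ∑ j ∈ range N, (if j = i + k then (1 : R) else 0)
      = ∑ i ∈ range N, if 0 ≤ i ∧ i < N - k then (1 : R) else 0 := by
        refine sum_congr rfl fun i _ => ?_
        rw [sum_boole_of_imp_eq _ fun j hj => hj]
        exact if_congr (by rw [mem_range]; omega) rfl rfl
    _ = (N - k : ℕ) := by rw [sum_range_boole_le_and_lt]; congr 1; omega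

theorem sum_range_product_boole_add_add_one_eq (N k : ℕ) :
    ∑ p ∈ range N ×ˢ range N, (if p.1 + p.2 + 1 = k then (1 : R) else 0)
      = (min k N - (k - N) : ℕ) := by
  rw [sum_product]
  calc ∑ j ∈ range N, ∑ i ∈ range N, (if j + i + 1 = k then (1 : R) else 0)
      = ∑ j ∈ range N, if k - N ≤ j ∧ j < k then (1 : R) else 0 := by
        refine sum_congr rfl fun j _ => ?_
        rw [sum_boole_of_imp_eq _ (a := k - 1 - j) fun i hi => by omega]
        exact if_congr (by rw [mem_range]; omega) rfl rfl
    _ = _ := sum_range_boole_le_and_lt N _ _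

theorem sum_range_product_boole_fst_eq_add_and (N k l : ℕ) :
    ∑ p ∈ range N ×ˢ range N, (if p.1 = p.2 + k ∧ p.1 + p.2 + 1 = l then (1 : R) else 0)
      = if k < l ∧ Odd (k + l) ∧ k + l < 2 * N then 1 else 0 := by
  rw [sum_boole_of_imp_eq _ (a := ((l + k - 1) / 2, (l - k - 1) / 2))
    fun p hp => Prod.ext (by omega) (by omega)]
  exact if_congr (by rw [mem_product, mem_range, mem_range, Nat.odd_iff]; omega) rfl rfl

theorem sum_range_product_boole_snd_eq_add_and (N k l : ℕ) :
    ∑ p ∈ range N ×ˢ range N, (if p.2 = p.1 + k ∧ p.1 + p.2 + 1 = l then (1 : R) else 0)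
      = if k < l ∧ Odd (k + l) ∧ k + l < 2 * N then 1 else 0 := by
  rw [sum_boole_of_imp_eq _ (a := ((l - k - 1) / 2, (l + k - 1) / 2))
    fun p hp => Prod.ext (by omega) (by omega)]
  exact if_congr (by rw [mem_product, mem_range, mem_range, Nat.odd_iff]; omega) rfl rfl

end LatticeCounts

theorem intervalIntegral.integral_integral_sum_mul {ι : Type*} (s : Finset ι) {f g : ι → ℝ → ℝ}
    {a b c d : ℝ} (hf : ∀ i ∈ s, IntervalIntegrable (f i) MeasureTheory.volume a b)
    (hg : ∀ i ∈ s, IntervalIntegrable (g i) MeasureTheory.volume c d) :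
    ∫ x in a..b, ∫ y in c..d, ∑ i ∈ s, f i x * g i y
      = ∑ i ∈ s, (∫ x in a..b, f i x) * ∫ y in c..d, g i y := by
  have hinner (x : ℝ) :
      ∫ y in c..d, ∑ i ∈ s, f i x * g i y = ∑ i ∈ s, f i x * ∫ y in c..d, g i y := by
    rw [intervalIntegral.integral_finsetSum fun i hi => (hg i hi).const_mul _]
    simp only [intervalIntegral.integral_const_mul]
  simp only [hinner]
  rw [intervalIntegral.integral_finsetSum fun i hi => (hf i hi).mul_const _]
  simp only [intervalIntegral.integral_mul_const]

theorem integral_cos_intCast_mul (c : ℤ) :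
    ∫ x in (0 : ℝ)..π, cos (c * x) = if c = 0 then π else 0 := by
  split_ifs with hc
  · simp [hc]
  · rw [intervalIntegral.integral_comp_mul_left (fun x => cos x) (Int.cast_ne_zero.2 hc)]
    simp [sin_int_mul_pi]

theorem integral_cos_intCast_mul_mul_cos_intCast_mul (p : ℤ) {q : ℤ} (hq : q ≠ 0) :
    ∫ x in (0 : ℝ)..π, cos (p * x) * cos (q * x) = if p = q ∨ p = -q then π / 2 else 0 := by
  have hsum (x : ℝ) :
      cos (p * x) * cos (q * x) = (cos (↑(p - q) * x) + cos (↑(p + q) * x)) / 2 := by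
    push_cast; rw [sub_mul, add_mul, ← two_mul_cos_mul_cos]; ring
  simp only [hsum]
  rw [intervalIntegral.integral_div, intervalIntegral.integral_add
    (Continuous.intervalIntegrable (by fun_prop) _ _)
    (Continuous.intervalIntegrable (by fun_prop) _ _),
    integral_cos_intCast_mul, integral_cos_intCast_mul]
  split_ifs <;> first | omega | ring

def halfSin (j : ℕ) (x : ℝ) : ℝ := sin ((2 * (j : ℝ) + 1) / 2 * x)

@[fun_prop]
theorem continuous_halfSin (j : ℕ) : Continuous (halfSin j) := by
  unfold halfSin; fun_prop

def halfSinCosCoeff (p : ℕ × ℕ) (m : ℕ) : ℝ :=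
  (if p.1 = p.2 + m ∨ p.2 = p.1 + m then 1 else 0) - if p.1 + p.2 + 1 = m then 1 else 0

theorem K_eq_sum_halfSin (N : ℕ) (x y : ℝ) :
    K N x y = 2 * ∑ j ∈ range N, halfSin j x * halfSin j y := rfl

theorem two_mul_halfSin_mul_halfSin (j i : ℕ) (x : ℝ) :
    2 * halfSin j x * halfSin i x
      = cos (((j - i : ℤ) : ℝ) * x) - cos (((j + i + 1 : ℤ) : ℝ) * x) := by
  rw [halfSin, halfSin, two_mul_sin_mul_sin]
  push_cast; ring_nf

theorem integral_halfSin_mul_halfSin_mul_cos (j i : ℕ) {m : ℕ} (hm : m ≠ 0) :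
    ∫ x in (0 : ℝ)..π, halfSin j x * halfSin i x * cos (m * x)
      = π / 4 * halfSinCosCoeff (j, i) m := by
  have hprod (x : ℝ) : halfSin j x * halfSin i x * cos (m * x)
      = (cos (((j - i : ℤ) : ℝ) * x) * cos (((m : ℤ) : ℝ) * x)
        - cos (((j + i + 1 : ℤ) : ℝ) * x) * cos (((m : ℤ) : ℝ) * x)) / 2 := by
    rw [← sub_mul, ← two_mul_halfSin_mul_halfSin, Int.cast_natCast]
    ring
  have hm' : (m : ℤ) ≠ 0 := by exact_mod_cast hm
  simp only [hprod]
  rw [intervalIntegral.integral_div, intervalIntegral.integral_sub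
    (Continuous.intervalIntegrable (by fun_prop) _ _)
    (Continuous.intervalIntegrable (by fun_prop) _ _),
    integral_cos_intCast_mul_mul_cos_intCast_mul _ hm',
    integral_cos_intCast_mul_mul_cos_intCast_mul _ hm', halfSinCosCoeff]
  split_ifs <;> first | omega | ring

theorem halfSinCosCoeff_sq (p : ℕ × ℕ) {k : ℕ} (hk : k ≠ 0) :
    halfSinCosCoeff p k ^ 2 = (if p.1 = p.2 + k then 1 else 0) + (if p.2 = p.1 + k then 1 else 0)
      + if p.1 + p.2 + 1 = k then 1 else 0 := by
  unfold halfSinCosCoeff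
  split_ifs <;> first | omega | norm_num

theorem halfSinCosCoeff_mul_halfSinCosCoeff (p : ℕ × ℕ) {k l : ℕ} (hk : k ≠ 0) (hl : l ≠ 0)
    (hkl : k ≠ l) :
    halfSinCosCoeff p k * halfSinCosCoeff p l =
      -((if p.1 = p.2 + k ∧ p.1 + p.2 + 1 = l then 1 else 0)
        + (if p.2 = p.1 + k ∧ p.1 + p.2 + 1 = l then 1 else 0)
        + (if p.1 = p.2 + l ∧ p.1 + p.2 + 1 = k then 1 else 0)
        + if p.2 = p.1 + l ∧ p.1 + p.2 + 1 = k then 1 else 0) := by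
  unfold halfSinCosCoeff
  split_ifs <;> first | omega | norm_num

theorem sum_halfSinCosCoeff_diag (N : ℕ) {k : ℕ} (hk : k ≠ 0) :
    ∑ j ∈ range N, halfSinCosCoeff (j, j) k = -eps N k := by
  have hdiag (j : ℕ) : halfSinCosCoeff (j, j) k = -if j + j + 1 = k then 1 else 0 := by
    simp [halfSinCosCoeff, hk]
  rw [sum_congr rfl fun j _ => hdiag j, sum_neg_distrib,
    sum_boole_of_imp_eq _ (a := (k - 1) / 2) (fun j hj => by omega), eps]
  congr 1
  exact if_congr (by rw [mem_range, Nat.odd_iff]; omega) rfl rfl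

theorem sum_halfSinCosCoeff_sq (N : ℕ) {k : ℕ} (hk : k ≠ 0) :
    ∑ p ∈ range N ×ˢ range N, halfSinCosCoeff p k ^ 2 = max (2 * (N : ℝ) - k) 0 := by
  have hswap : ∑ p ∈ range N ×ˢ range N, (if p.2 = p.1 + k then (1 : ℝ) else 0)
      = ∑ p ∈ range N ×ˢ range N, (if p.1 = p.2 + k then (1 : ℝ) else 0) := by
    rw [sum_product, sum_product_right]
  simp only [halfSinCosCoeff_sq _ hk, sum_add_distrib, hswap,
    sum_range_product_boole_fst_eq_add, sum_range_product_boole_add_add_one_eq]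
  rw [← Nat.cast_add, ← Nat.cast_add,
    show N - k + (N - k) + (min k N - (k - N)) = 2 * N - k by omega]
  rcases le_total k (2 * N) with h | h
  · rw [Nat.cast_sub h, max_eq_left (sub_nonneg.2 (by exact_mod_cast h))]
    push_cast; ring
  · rw [Nat.sub_eq_zero_of_le h, max_eq_right (sub_nonpos.2 (by exact_mod_cast h))]
    simp

theorem sum_halfSinCosCoeff_mul_halfSinCosCoeff (N : ℕ) {k l : ℕ} (hk : k ≠ 0) (hl : l ≠ 0)
    (hkl : k ≠ l) :
    ∑ p ∈ range N ×ˢ range N, halfSinCosCoeff p k * halfSinCosCoeff p l = -2 * eps N (k + l) := by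
  simp only [halfSinCosCoeff_mul_halfSinCosCoeff _ hk hl hkl, sum_neg_distrib, sum_add_distrib,
    sum_range_product_boole_fst_eq_add_and, sum_range_product_boole_snd_eq_add_and, eps,
    Nat.odd_iff]
  split_ifs <;> first | omega | norm_num

theorem integral_K_diag_mul_cos (N : ℕ) {k : ℕ} (hk : k ≠ 0) :
    ∫ x in (0 : ℝ)..π, K N x x * cos (k * x)
      = π / 2 * ∑ j ∈ range N, halfSinCosCoeff (j, j) k := by
  have hK (x : ℝ) : K N x x * cos (k * x)
      = ∑ j ∈ range N, 2 * (halfSin j x * halfSin j x * cos (k * x)) := by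
    rw [K_eq_sum_halfSin, mul_sum, sum_mul]
    exact sum_congr rfl fun j _ => by ring
  simp only [hK]
  rw [intervalIntegral.integral_finsetSum
    fun j _ => Continuous.intervalIntegrable (by fun_prop) _ _, mul_sum]
  refine sum_congr rfl fun j _ => ?_
  rw [intervalIntegral.integral_const_mul, integral_halfSin_mul_halfSin_mul_cos j j hk]
  ring

theorem K_sq_mul_cos_mul_cos (N k l : ℕ) (x y : ℝ) :
    K N x y ^ 2 * cos (k * x) * cos (l * y) = ∑ p ∈ range N ×ˢ range N,
      2 * (halfSin p.1 x * halfSin p.2 x * cos (k * x))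
        * (2 * (halfSin p.1 y * halfSin p.2 y * cos (l * y))) := by
  have hsq (S c c' : ℝ) : (2 * S) ^ 2 * c * c' = S * S * (4 * c * c') := by ring
  rw [K_eq_sum_halfSin, hsq, sum_mul_sum, sum_mul, sum_product]
  refine sum_congr rfl fun j _ => ?_
  rw [sum_mul]
  exact sum_congr rfl fun i _ => by ring

theorem integral_integral_K_sq_mul_cos_mul_cos (N : ℕ) {k l : ℕ} (hk : k ≠ 0) (hl : l ≠ 0) :
    ∫ x in (0 : ℝ)..π, ∫ y in (0 : ℝ)..π, K N x y ^ 2 * cos (k * x) * cos (l * y)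
      = π ^ 2 / 4 * ∑ p ∈ range N ×ˢ range N, halfSinCosCoeff p k * halfSinCosCoeff p l := by
  simp only [K_sq_mul_cos_mul_cos]
  rw [intervalIntegral.integral_integral_sum_mul _
    (fun _ _ => Continuous.intervalIntegrable (by fun_prop) _ _)
    (fun _ _ => Continuous.intervalIntegrable (by fun_prop) _ _), mul_sum]
  refine sum_congr rfl fun p _ => ?_
  rw [intervalIntegral.integral_const_mul, intervalIntegral.integral_const_mul,
    integral_halfSin_mul_halfSin_mul_cos _ _ hk, integral_halfSin_mul_halfSin_mul_cos _ _ hl]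
  ring

theorem kernel_integrals_SO_odd_general (N : ℕ) :
    ∀ k l : ℕ, 1 ≤ k → 1 ≤ l →
      ((1 / Real.pi) * ∫ x in (0:ℝ)..Real.pi, K N x x * Real.cos ((k : ℝ) * x)
          = -(eps N k) / 2) ∧
      (k = l →
        (1 / Real.pi ^ 2) * ∫ x in (0:ℝ)..Real.pi, ∫ y in (0:ℝ)..Real.pi,
            (K N x y) ^ 2 * Real.cos ((k : ℝ) * x) * Real.cos ((l : ℝ) * y)
          = max (2 * (N : ℝ) - (k : ℝ)) 0 / 4) ∧
      (k ≠ l →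
        (1 / Real.pi ^ 2) * ∫ x in (0:ℝ)..Real.pi, ∫ y in (0:ℝ)..Real.pi,
            (K N x y) ^ 2 * Real.cos ((k : ℝ) * x) * Real.cos ((l : ℝ) * y)
          = -(eps N (k + l)) / 2) := by
  intro k l hk hl
  have hk0 : k ≠ 0 := Nat.one_le_iff_ne_zero.1 hk
  have hl0 : l ≠ 0 := Nat.one_le_iff_ne_zero.1 hl
  refine ⟨?_, fun hkl => ?_, fun hkl => ?_⟩
  · rw [integral_K_diag_mul_cos N hk0, sum_halfSinCosCoeff_diag N hk0]
    field_simp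
  · subst hkl
    rw [integral_integral_K_sq_mul_cos_mul_cos N hk0 hk0]
    simp only [← sq, sum_halfSinCosCoeff_sq N hk0]
    field_simp
  · rw [integral_integral_K_sq_mul_cos_mul_cos N hk0 hl0,
      sum_halfSinCosCoeff_mul_halfSinCosCoeff N hk0 hl0 hkl]
    field_simp
    ring

/-- Integral identities for the `SO(2N+1)` kernel: for integers `k, ℓ ≥ 1`,
`(1/π) ∫₀^π K(x,x) cos(kx) dx = −ε(k)/2`;
if `k = ℓ` then `(1/π²) ∫₀^π ∫₀^π K(x,y)² cos(kx) cos(ℓy) dx dy = (2N − k)⁺/4`;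
and if `k ≠ ℓ` then this double integral equals `−ε(k+ℓ)/2`. -/
theorem kernel_integrals_SO_odd (N : ℕ) (hN : 1 ≤ N) :
    ∀ k l : ℕ, 1 ≤ k → 1 ≤ l →
      ((1 / Real.pi) * ∫ x in (0:ℝ)..Real.pi, K N x x * Real.cos ((k : ℝ) * x)
          = -(eps N k) / 2) ∧
      (k = l →
        (1 / Real.pi ^ 2) * ∫ x in (0:ℝ)..Real.pi, ∫ y in (0:ℝ)..Real.pi,
            (K N x y) ^ 2 * Real.cos ((k : ℝ) * x) * Real.cos ((l : ℝ) * y)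
          = max (2 * (N : ℝ) - (k : ℝ)) 0 / 4) ∧
      (k ≠ l →
        (1 / Real.pi ^ 2) * ∫ x in (0:ℝ)..Real.pi, ∫ y in (0:ℝ)..Real.pi,
            (K N x y) ^ 2 * Real.cos ((k : ℝ) * x) * Real.cos ((l : ℝ) * y)
          = -(eps N (k + l)) / 2) :=
  kernel_integrals_SO_odd_general N
end
end

section
/- Let N ≥ 1 and define K(x,y) = 2 Σ_{j=0}^{N−1} sin(((2j+1)/2)x)·sin(((2j+1)/2)y), and for integers a, b, c set α(a,b,c) = (min{a,N} + min{b,N} − c)⁺ with x⁺ = max{x,0}. Then for all integers k, ℓ ≥ 1: (1/π³) ∫₀^π ∫₀^π ∫₀^π K(x,y) K(y,z) K(z,x) cos(kx) cos(ℓy) cos((k+ℓ)z) dx dy dz = (N − k − ℓ)⁺/4 + (α(k+ℓ, ℓ, k+ℓ) + α(k+ℓ, k, k+ℓ))/8; moreover (1/π⁴) ∫₀^π ∫₀^π ∫₀^π ∫₀^π K(x,y) K(y,z) K(z,w) K(w,x) cos(kx) cos(ky) cos(kz) cos(kw) dx dy dz dw = (N − k)⁺/4 + (2N − k)⁺/16.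 -/
/-!
Writing `K(x,y) = 2 ⟨s(x), s(y)⟩` with `s(x) = (sin((2j+1)x/2))_{j<N}`, a cyclic integral
`∫⋯∫ K(x₁,x₂) K(x₂,x₃) ⋯ K(x_r,x₁) f₁(x₁) ⋯ f_r(x_r)` collapses, one variable at a time, to
`2^r tr(G(f₁) ⋯ G(f_r))`, where `G(f)_{ij} = ∫₀^π s_i s_j f`. By the product-to-sum formulas,
`G(cos(n·)) = (π/4) A_n` with `A_n(i,j) = [|i-j| = n] - [i+j+1 = n]` (`sinCosCoeff`). A row of
`A_n` has at most three nonzero entries, so the diagonal entries of `A_l A_{k+l} A_k` and `A_k⁴`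
are sums of indicators in `i`, and the traces follow by counting the rows where each indicator is 1.
-/

noncomputable section

/-- `α(a,b,c) = (min{a,N} + min{b,N} − c)⁺`. -/
def alph (N : ℕ) (a b c : ℤ) : ℝ :=
  ((max (min a (N : ℤ) + min b (N : ℤ) - c) 0 : ℤ) : ℝ)

open Real Finset Matrix intervalIntegral
open MeasureTheory (volume)

section FiniteRankKernel

variable {ι : Type*} [Fintype ι] {a b : ℝ}

theorem integral_sum_sum_const_mul {F : ι → ι → ℝ → ℝ}
    (hF : ∀ i j, IntervalIntegrable (F i j) volume a b) (c : ι → ι → ℝ) :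
    ∫ x in a..b, ∑ i, ∑ j, c i j * F i j x = ∑ i, ∑ j, c i j * ∫ x in a..b, F i j x := by
  have hrow : ∀ i, IntervalIntegrable (fun x => ∑ j, c i j * F i j x) volume a b := fun i => by
    simpa only [sum_fn] using IntervalIntegrable.sum _ fun j _ => (hF i j).const_mul (c i j)
  rw [integral_finsetSum fun i _ => hrow i]
  refine sum_congr rfl fun i _ => ?_
  rw [integral_finsetSum fun j _ => (hF i j).const_mul (c i j)]
  simp_rw [integral_const_mul]

def gramMatrix (φ : ℝ → ι → ℝ) (a b : ℝ) (f : ℝ → ℝ) : Matrix ι ι ℝ :=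
  Matrix.of fun i j => ∫ x in a..b, φ x i * φ x j * f x

variable {φ : ℝ → ι → ℝ} {f : ℝ → ℝ}

theorem integral_dotProduct_mul_mul_dotProduct
    (hf : ∀ i j, IntervalIntegrable (fun x => φ x i * φ x j * f x) volume a b) (u v : ι → ℝ) :
    ∫ x in a..b, (u ⬝ᵥ φ x) * f x * (φ x ⬝ᵥ v) = u ⬝ᵥ gramMatrix φ a b f *ᵥ v := by
  have expand : ∀ x, (u ⬝ᵥ φ x) * f x * (φ x ⬝ᵥ v)
      = ∑ i, ∑ j, u i * v j * (φ x i * φ x j * f x) := fun x => by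
    rw [dotProduct, dotProduct, sum_mul, sum_mul_sum]
    exact sum_congr rfl fun i _ => sum_congr rfl fun j _ => by ring
  rw [integral_congr fun x _ => expand x,
    integral_sum_sum_const_mul (F := fun i j x => φ x i * φ x j * f x) hf]
  simp only [dotProduct, mulVec, gramMatrix, of_apply, mul_sum]
  exact sum_congr rfl fun i _ => sum_congr rfl fun j _ => by ring

theorem integral_dotProduct_mulVec_mul
    (hf : ∀ i j, IntervalIntegrable (fun x => φ x i * φ x j * f x) volume a b) (A : Matrix ι ι ℝ) :
    ∫ x in a..b, (φ x ⬝ᵥ A *ᵥ φ x) * f x = trace (A * gramMatrix φ a b f) := by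
  have expand : ∀ x, (φ x ⬝ᵥ A *ᵥ φ x) * f x
      = ∑ i, ∑ j, A i j * (φ x j * φ x i * f x) := fun x => by
    simp only [dotProduct, mulVec, sum_mul, mul_sum]
    exact sum_congr rfl fun i _ => sum_congr rfl fun j _ => by ring
  rw [integral_congr fun x _ => expand x]
  refine (integral_sum_sum_const_mul (fun i j => hf j i) A).trans ?_
  simp only [trace, Matrix.diag, mul_apply, gramMatrix, of_apply]

theorem integral_cyclic_three {κ : ℝ → ℝ → ℝ} {c : ℝ} (hκ : ∀ x y, κ x y = c * (φ x ⬝ᵥ φ y))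
    {f g h : ℝ → ℝ}
    (hf : ∀ i j, IntervalIntegrable (fun x => φ x i * φ x j * f x) volume a b)
    (hg : ∀ i j, IntervalIntegrable (fun x => φ x i * φ x j * g x) volume a b)
    (hh : ∀ i j, IntervalIntegrable (fun x => φ x i * φ x j * h x) volume a b) :
    ∫ x in a..b, ∫ y in a..b, ∫ z in a..b, κ x y * κ y z * κ z x * f x * g y * h z
      = c ^ 3 * trace (gramMatrix φ a b f * gramMatrix φ a b g * gramMatrix φ a b h) := by
  set G := gramMatrix φ a b
  have hz : ∀ x y, ∫ z in a..b, κ x y * κ y z * κ z x * f x * g y * h z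
      = c ^ 2 * κ x y * f x * g y * (φ y ⬝ᵥ G h *ᵥ φ x) := fun x y => by
    rw [← integral_dotProduct_mul_mul_dotProduct hh, ← integral_const_mul]
    exact integral_congr fun z _ => by simp only [hκ]; ring
  have hy : ∀ x, ∫ y in a..b, c ^ 2 * κ x y * f x * g y * (φ y ⬝ᵥ G h *ᵥ φ x)
      = c ^ 3 * ((φ x ⬝ᵥ (G g * G h) *ᵥ φ x) * f x) := fun x => by
    rw [← mulVec_mulVec, ← integral_dotProduct_mul_mul_dotProduct hg, mul_comm _ (f x),
      ← integral_const_mul, ← integral_const_mul]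
    exact integral_congr fun y _ => by simp only [hκ]; ring
  simp only [hz, hy, integral_const_mul, integral_dotProduct_mulVec_mul hf]
  rw [trace_mul_cycle]

theorem integral_cyclic_four {κ : ℝ → ℝ → ℝ} {c : ℝ} (hκ : ∀ x y, κ x y = c * (φ x ⬝ᵥ φ y))
    {f g h e : ℝ → ℝ}
    (hf : ∀ i j, IntervalIntegrable (fun x => φ x i * φ x j * f x) volume a b)
    (hg : ∀ i j, IntervalIntegrable (fun x => φ x i * φ x j * g x) volume a b)
    (hh : ∀ i j, IntervalIntegrable (fun x => φ x i * φ x j * h x) volume a b)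
    (he : ∀ i j, IntervalIntegrable (fun x => φ x i * φ x j * e x) volume a b) :
    ∫ x in a..b, ∫ y in a..b, ∫ z in a..b, ∫ w in a..b,
        κ x y * κ y z * κ z w * κ w x * f x * g y * h z * e w
      = c ^ 4 * trace (gramMatrix φ a b f * gramMatrix φ a b g * gramMatrix φ a b h
          * gramMatrix φ a b e) := by
  set G := gramMatrix φ a b
  have hw : ∀ x y z, ∫ w in a..b, κ x y * κ y z * κ z w * κ w x * f x * g y * h z * e w
      = c ^ 2 * κ x y * κ y z * f x * g y * h z * (φ z ⬝ᵥ G e *ᵥ φ x) := fun x y z => by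
    rw [← integral_dotProduct_mul_mul_dotProduct he, ← integral_const_mul]
    exact integral_congr fun w _ => by simp only [hκ]; ring
  have hz : ∀ x y, ∫ z in a..b, c ^ 2 * κ x y * κ y z * f x * g y * h z * (φ z ⬝ᵥ G e *ᵥ φ x)
      = c ^ 3 * κ x y * f x * g y * (φ y ⬝ᵥ (G h * G e) *ᵥ φ x) := fun x y => by
    rw [← mulVec_mulVec, ← integral_dotProduct_mul_mul_dotProduct hh, ← integral_const_mul]
    exact integral_congr fun z _ => by simp only [hκ]; ring
  have hy : ∀ x, ∫ y in a..b, c ^ 3 * κ x y * f x * g y * (φ y ⬝ᵥ (G h * G e) *ᵥ φ x)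
      = c ^ 4 * ((φ x ⬝ᵥ (G g * G h * G e) *ᵥ φ x) * f x) := fun x => by
    rw [Matrix.mul_assoc (G g), ← mulVec_mulVec (M := G g),
      ← integral_dotProduct_mul_mul_dotProduct hg, mul_comm _ (f x), ← integral_const_mul,
      ← integral_const_mul]
    exact integral_congr fun y _ => by simp only [hκ]; ring
  simp only [hw, hz, hy, integral_const_mul, integral_dotProduct_mulVec_mul hf]
  rw [trace_mul_comm, ← Matrix.mul_assoc, ← Matrix.mul_assoc]

end FiniteRankKernel

def sinCosCoeff (n i j : ℕ) : ℝ :=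
  (if i = j + n ∨ j = i + n then 1 else 0) - (if i + j + 1 = n then 1 else 0)

theorem sinCosCoeff_comm (n i j : ℕ) : sinCosCoeff n i j = sinCosCoeff n j i := by
  simp only [sinCosCoeff, or_comm, add_comm i j]

theorem sinCosCoeff_of_eq_add {n i j : ℕ} (h : j = i + n) : sinCosCoeff n i j = 1 := by
  unfold sinCosCoeff; split_ifs <;> first | (exfalso; omega) | norm_num

theorem sinCosCoeff_of_eq_sub {n i j : ℕ} (h : i = j + n) : sinCosCoeff n i j = 1 := by
  unfold sinCosCoeff; split_ifs <;> first | (exfalso; omega) | norm_num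

theorem sinCosCoeff_of_add_eq {n i j : ℕ} (h : i + j + 1 = n) : sinCosCoeff n i j = -1 := by
  unfold sinCosCoeff; split_ifs <;> first | (exfalso; omega) | norm_num

theorem sinCosCoeff_eq_zero {n i j : ℕ} (h : ¬(j = i + n ∨ i = j + n ∨ i + j + 1 = n)) :
    sinCosCoeff n i j = 0 := by
  unfold sinCosCoeff; split_ifs <;> first | (exfalso; omega) | norm_num

theorem sum_sinCosCoeff_mul {n : ℕ} (hn : 1 ≤ n) (N i : ℕ) (f : ℕ → ℝ) :
    ∑ j ∈ range N, sinCosCoeff n i j * f j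
      = (if i + n < N then f (i + n) else 0) + (if n ≤ i ∧ i - n < N then f (i - n) else 0)
        - (if i < n ∧ n - 1 - i < N then f (n - 1 - i) else 0) := by
  have expand : ∀ j, sinCosCoeff n i j * f j
      = (if j = i + n then f j else 0) + (if j = i - n then (if n ≤ i then f j else 0) else 0)
        - (if j = n - 1 - i then (if i < n then f j else 0) else 0) := fun j => by
    unfold sinCosCoeff
    split_ifs <;> first | (exfalso; omega) | ring
  simp only [expand, sum_sub_distrib, sum_add_distrib, sum_ite_eq', mem_range]
  split_ifs <;> first | rfl | (exfalso; omega)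

theorem integral_cos_int_mul (m : ℤ) :
    ∫ x in (0:ℝ)..π, cos (m * x) = if m = 0 then π else 0 := by
  split_ifs with hm
  · simp [hm]
  · have hm' : (m : ℝ) ≠ 0 := Int.cast_ne_zero.mpr hm
    rw [integral_comp_mul_left (fun x => cos x) hm', integral_cos, mul_zero, sin_zero,
      sin_int_mul_pi, sub_zero, smul_zero]

theorem sin_mul_sin_mul_cos (p q r : ℝ) :
    sin p * sin q * cos r
      = (cos (p - q - r) + cos (p - q + r) - cos (p + q - r) - cos (p + q + r)) / 4 := by
  simp only [cos_add, cos_sub, sin_add, sin_sub]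
  ring

theorem integral_sin_mul_sin_mul_cos {n : ℕ} (hn : 1 ≤ n) (i j : ℕ) :
    ∫ x in (0:ℝ)..π, sin ((2 * (i : ℝ) + 1) / 2 * x) * sin ((2 * (j : ℝ) + 1) / 2 * x) * cos (n * x)
      = π / 4 * sinCosCoeff n i j := by
  have product_to_sum : ∀ x : ℝ,
      sin ((2 * (i : ℝ) + 1) / 2 * x) * sin ((2 * (j : ℝ) + 1) / 2 * x) * cos (n * x)
      = (cos (((i - j - n : ℤ) : ℝ) * x) + cos (((i - j + n : ℤ) : ℝ) * x)
        - cos (((i + j + 1 - n : ℤ) : ℝ) * x) - cos (((i + j + 1 + n : ℤ) : ℝ) * x)) / 4 := by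
    intro x
    rw [sin_mul_sin_mul_cos]
    push_cast
    ring_nf
  have hcos : ∀ m : ℤ, IntervalIntegrable (fun x => cos ((m : ℝ) * x)) volume 0 π :=
    fun m => by apply Continuous.intervalIntegrable; fun_prop
  simp only [product_to_sum]
  rw [integral_div, integral_sub (((hcos _).add (hcos _)).sub (hcos _)) (hcos _),
    integral_sub ((hcos _).add (hcos _)) (hcos _), integral_add (hcos _) (hcos _)]
  simp only [integral_cos_int_mul, sinCosCoeff]
  split_ifs <;> first | (exfalso; omega) | ring

theorem sum_range_boole_of_iff_Ico {N a b : ℕ} {C : ℕ → Prop} [DecidablePred C]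
    (h : ∀ i < N, (C i ↔ a ≤ i ∧ i < b)) :
    ∑ i ∈ range N, (if C i then (1:ℝ) else 0) = ((min b N - a : ℕ) : ℝ) := by
  rw [sum_boole]
  congr 1
  have : {i ∈ range N | C i} = Ico a (min b N) := by
    ext i
    simp only [mem_filter, mem_range, mem_Ico]
    constructor
    · rintro ⟨hiN, hC⟩
      have := (h i hiN).mp hC
      omega
    · rintro ⟨hai, hib⟩
      exact ⟨by omega, (h i (by omega)).mpr (by omega)⟩
  rw [this, Nat.card_Ico]

def sqCoeff (N n i m : ℕ) : ℝ := ∑ j ∈ range N, sinCosCoeff n i j * sinCosCoeff n j m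

section Traces

variable {k l N i : ℕ}

theorem sum_sinCosCoeff_three_cycle (hk : 1 ≤ k) (hl : 1 ≤ l) (hi : i < N) :
    ∑ m ∈ range N, (∑ j ∈ range N, sinCosCoeff l i j * sinCosCoeff (k + l) j m) * sinCosCoeff k m i
      = (if k ≤ i ∧ i + l < N then 1 else 0) + (if i < k ∧ k - 1 - i < N ∧ i + l < N then 1 else 0)
        + (if l ≤ i ∧ i + k < N then 1 else 0)
        + (if i < l ∧ l - 1 - i < N ∧ i + k < N then 1 else 0) := by
  simp only [sum_mul, mul_assoc]
  rw [sum_comm]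
  simp only [← mul_sum, sinCosCoeff_comm k _ i]
  simp only [sum_sinCosCoeff_mul hl, sum_sinCosCoeff_mul (show 1 ≤ k + l by omega)]
  simp (config := {contextual := true}) (disch := omega) only [sinCosCoeff_of_eq_add,
    sinCosCoeff_of_eq_sub, sinCosCoeff_of_add_eq, sinCosCoeff_eq_zero]
  rcases Nat.lt_or_ge i k with h1 | h1 <;> rcases Nat.lt_or_ge i l with h2 | h2 <;>
    by_cases h3 : i + k < N <;> by_cases h4 : i + l < N <;> by_cases h5 : k - 1 - i < N <;>
    by_cases h6 : l - 1 - i < N <;>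
    -- each remaining condition is decided by the position of `i` relative to `k`, `l` and `N`
    first
    | (exfalso; omega)
    | (simp (disch := omega) only [if_pos, if_neg]; norm_num)

theorem sqCoeff_comm (m : ℕ) : sqCoeff N k i m = sqCoeff N k m i := by
  simp only [sqCoeff, sinCosCoeff_comm k i, sinCosCoeff_comm k _ m, mul_comm]

theorem sqCoeff_of_eq_self (hk : 1 ≤ k) (hi : i < N) {m : ℕ} (hm : m = i) :
    sqCoeff N k i m = (if i + k < N then 1 else 0) + (if k ≤ i then 1 else 0)
      + (if i < k ∧ k - 1 - i < N then 1 else 0) := by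
  subst hm
  rw [sqCoeff, sum_sinCosCoeff_mul hk]
  simp (config := {contextual := true}) (disch := omega) only [sinCosCoeff_of_eq_add,
    sinCosCoeff_of_eq_sub, sinCosCoeff_of_add_eq]
  split_ifs <;> first | (exfalso; omega) | norm_num

theorem sqCoeff_of_eq_add (hk : 1 ≤ k) {m : ℕ} (hm : m = i + 2 * k) :
    sqCoeff N k i m = if i + k < N then 1 else 0 := by
  rw [sqCoeff, sum_sinCosCoeff_mul hk]
  simp (config := {contextual := true}) (disch := omega) only [sinCosCoeff_of_eq_add,
    sinCosCoeff_eq_zero]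
  split_ifs <;> first | (exfalso; omega) | norm_num

theorem sqCoeff_of_eq_sub (hk : 1 ≤ k) (hi : i < N) (h2k : 2 * k ≤ i) {m : ℕ}
    (hm : m = i - 2 * k) :
    sqCoeff N k i m = 1 := by
  rw [sqCoeff, sum_sinCosCoeff_mul hk]
  simp (config := {contextual := true}) (disch := omega) only [sinCosCoeff_of_eq_add,
    sinCosCoeff_of_eq_sub, sinCosCoeff_eq_zero]
  split_ifs <;> first | (exfalso; omega) | norm_num

theorem sqCoeff_of_eq_reflect (hk : 1 ≤ k) (hi : i < N) (h2k : i < 2 * k) {m : ℕ}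
    (hm : m = 2 * k - 1 - i) :
    sqCoeff N k i m = -((if k ≤ i then 1 else 0) + (if i < k ∧ k - 1 - i < N then 1 else 0)) := by
  rw [sqCoeff, sum_sinCosCoeff_mul hk]
  simp (config := {contextual := true}) (disch := omega) only [sinCosCoeff_of_eq_add,
    sinCosCoeff_of_add_eq, sinCosCoeff_eq_zero]
  split_ifs <;> first | (exfalso; omega) | norm_num

theorem sum_sqCoeff_mul_sqCoeff (hk : 1 ≤ k) (hi : i < N) :
    ∑ m ∈ range N, sqCoeff N k i m * sqCoeff N k m i
      = (if i + 2 * k < N then (1:ℝ) else 0) + (if i + k < N then 1 else 0)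
        + 2 * (if k ≤ i ∧ i + k < N then 1 else 0) + (if k ≤ i then 1 else 0)
        + (if 2 * k ≤ i then 1 else 0)
        + 2 * (if i < k ∧ k - 1 - i < N ∧ i + k < N then 1 else 0)
        + (if k ≤ i ∧ i < 2 * k ∧ 2 * k - 1 - i < N then 1 else 0)
        + (if i < k ∧ 2 * k - 1 - i < N then 1 else 0)
        + (if i < k ∧ k - 1 - i < N then 1 else 0) := by
  -- after expanding one factor, `sqCoeff N k i` is only needed at `i`, `i ± 2k` and `2k - 1 - i`
  simp only [← sqCoeff_comm]
  conv_lhs => enter [2, m, 1]; rw [sqCoeff]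
  simp only [sum_mul, mul_assoc]
  rw [sum_comm]
  simp only [← mul_sum, sum_sinCosCoeff_mul hk]
  simp (config := {contextual := true}) (disch := omega) only [sqCoeff_of_eq_self hk hi,
    sqCoeff_of_eq_add hk, sqCoeff_of_eq_sub hk hi, sqCoeff_of_eq_reflect hk hi]
  rcases Nat.lt_or_ge i k with h1 | h1 <;> rcases Nat.lt_or_ge i (2 * k) with h2 | h2 <;>
    by_cases h3 : i + k < N <;> by_cases h4 : i + 2 * k < N <;> by_cases h5 : k - 1 - i < N <;>
    by_cases h6 : 2 * k - 1 - i < N <;>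
    first
    | (exfalso; omega)
    | (simp (disch := omega) only [if_pos, if_neg, ↓reduceIte, and_self]; norm_num)

def cosCoeffMatrix (N n : ℕ) : Matrix (Fin N) (Fin N) ℝ := of fun i j => sinCosCoeff n i j

theorem of_mul_of_fin (a b : ℕ → ℕ → ℝ) :
    (of fun i j : Fin N => a i j) * (of fun i j : Fin N => b i j)
      = of fun i j : Fin N => ∑ p ∈ range N, a i p * b p j := by
  ext i j
  simp only [mul_apply, of_apply]
  exact Fin.sum_univ_eq_sum_range (fun p => a i p * b p j) N

theorem trace_of_fin (a : ℕ → ℕ → ℝ) :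
    trace (of fun i j : Fin N => a i j) = ∑ i ∈ range N, a i i :=
  Fin.sum_univ_eq_sum_range (fun i => a i i) N

theorem trace_cosCoeffMatrix_mul_mul (hk : 1 ≤ k) (hl : 1 ≤ l) :
    trace (cosCoeffMatrix N k * cosCoeffMatrix N l * cosCoeffMatrix N (k + l))
      = ((2 * max ((N : ℤ) - k - l) 0 + max (min ((k : ℤ) + l) N + min (l : ℤ) N - (k + l)) 0
          + max (min ((k : ℤ) + l) N + min (k : ℤ) N - (k + l)) 0 : ℤ) : ℝ) := by
  rw [← trace_mul_cycle, cosCoeffMatrix, cosCoeffMatrix, cosCoeffMatrix, of_mul_of_fin,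
    of_mul_of_fin (fun i m => ∑ j ∈ range N, sinCosCoeff l i j * sinCosCoeff (k + l) j m),
    trace_of_fin (fun i i' => ∑ m ∈ range N,
      (∑ j ∈ range N, sinCosCoeff l i j * sinCosCoeff (k + l) j m) * sinCosCoeff k m i'),
    sum_congr rfl fun i hi => sum_sinCosCoeff_three_cycle hk hl (mem_range.mp hi)]
  simp only [sum_add_distrib]
  rw [sum_range_boole_of_iff_Ico (a := k) (b := N - l) (fun i hi => by omega),
    sum_range_boole_of_iff_Ico (a := k - N) (b := min k (N - l)) (fun i hi => by omega),
    sum_range_boole_of_iff_Ico (a := l) (b := N - k) (fun i hi => by omega),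
    sum_range_boole_of_iff_Ico (a := l - N) (b := min l (N - k)) (fun i hi => by omega)]
  simp only [← Int.cast_natCast (R := ℝ), two_mul, ← Int.cast_add, Int.cast_inj]
  omega

theorem trace_cosCoeffMatrix_pow_four (hk : 1 ≤ k) :
    trace (cosCoeffMatrix N k * cosCoeffMatrix N k * cosCoeffMatrix N k * cosCoeffMatrix N k)
      = ((4 * max ((N : ℤ) - k) 0 + max (2 * (N : ℤ) - k) 0 : ℤ) : ℝ) := by
  rw [Matrix.mul_assoc (cosCoeffMatrix N k * cosCoeffMatrix N k), cosCoeffMatrix, of_mul_of_fin]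
  change trace ((of fun i j : Fin N => sqCoeff N k i j) * (of fun i j : Fin N => sqCoeff N k i j))
    = _
  rw [of_mul_of_fin, trace_of_fin (fun i i' => ∑ m ∈ range N, sqCoeff N k i m * sqCoeff N k m i')]
  rw [sum_congr rfl fun i hi => sum_sqCoeff_mul_sqCoeff hk (mem_range.mp hi)]
  simp only [sum_add_distrib, ← mul_sum]
  rw [sum_range_boole_of_iff_Ico (a := 0) (b := N - 2 * k) (fun i hi => by omega),
    sum_range_boole_of_iff_Ico (a := 0) (b := N - k) (fun i hi => by omega),
    sum_range_boole_of_iff_Ico (a := k) (b := N - k) (fun i hi => by omega),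
    sum_range_boole_of_iff_Ico (a := k) (b := N) (fun i hi => by omega),
    sum_range_boole_of_iff_Ico (a := 2 * k) (b := N) (fun i hi => by omega),
    sum_range_boole_of_iff_Ico (a := k - N) (b := min k (N - k)) (fun i hi => by omega),
    sum_range_boole_of_iff_Ico (a := max k (2 * k - N)) (b := 2 * k) (fun i hi => by omega),
    sum_range_boole_of_iff_Ico (a := 2 * k - N) (b := k) (fun i hi => by omega),
    sum_range_boole_of_iff_Ico (a := k - N) (b := k) (fun i hi => by omega)]
  simp only [← Int.cast_natCast (R := ℝ), two_mul, ← Int.cast_add, Int.cast_inj]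
  omega

end Traces

def sinVec (N : ℕ) (x : ℝ) : Fin N → ℝ := fun j => sin ((2 * (j : ℝ) + 1) / 2 * x)

theorem K_eq_two_mul_dotProduct (N : ℕ) (x y : ℝ) :
    K N x y = 2 * (sinVec N x ⬝ᵥ sinVec N y) := by
  rw [K, Finset.sum_range]
  rfl

theorem intervalIntegrable_sinVec_mul_cos (N : ℕ) (c : ℝ) (i j : Fin N) :
    IntervalIntegrable (fun x => sinVec N x i * sinVec N x j * cos (c * x)) volume 0 π := by
  apply Continuous.intervalIntegrable
  unfold sinVec
  fun_prop

theorem gramMatrix_sinVec_cos {N n : ℕ} (hn : 1 ≤ n) :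
    gramMatrix (sinVec N) 0 π (fun x => cos (n * x)) = (π / 4) • cosCoeffMatrix N n := by
  ext i j
  exact integral_sin_mul_sin_mul_cos hn i j

theorem kernel_triple_quadruple_integrals_SO_odd_general (N : ℕ) :
    ∀ k l : ℕ, 1 ≤ k → 1 ≤ l →
      ((1 / Real.pi ^ 3) * ∫ x in (0:ℝ)..Real.pi, ∫ y in (0:ℝ)..Real.pi,
          ∫ z in (0:ℝ)..Real.pi,
          K N x y * K N y z * K N z x
            * Real.cos ((k : ℝ) * x) * Real.cos ((l : ℝ) * y)
            * Real.cos (((k : ℝ) + (l : ℝ)) * z)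
        = max ((N : ℝ) - (k : ℝ) - (l : ℝ)) 0 / 4
          + (alph N ((k : ℤ) + (l : ℤ)) (l : ℤ) ((k : ℤ) + (l : ℤ))
            + alph N ((k : ℤ) + (l : ℤ)) (k : ℤ) ((k : ℤ) + (l : ℤ))) / 8) ∧
      ((1 / Real.pi ^ 4) * ∫ x in (0:ℝ)..Real.pi, ∫ y in (0:ℝ)..Real.pi,
          ∫ z in (0:ℝ)..Real.pi, ∫ w in (0:ℝ)..Real.pi,
          K N x y * K N y z * K N z w * K N w x
            * Real.cos ((k : ℝ) * x) * Real.cos ((k : ℝ) * y)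
            * Real.cos ((k : ℝ) * z) * Real.cos ((k : ℝ) * w)
        = max ((N : ℝ) - (k : ℝ)) 0 / 4 + max (2 * (N : ℝ) - (k : ℝ)) 0 / 16) := by
  intro k l hk hl
  have hK := K_eq_two_mul_dotProduct N
  have hint := intervalIntegrable_sinVec_mul_cos N
  have hkl : (k : ℝ) + l = ((k + l : ℕ) : ℝ) := by push_cast; ring
  rw [hkl, integral_cyclic_three hK (hint _) (hint _) (hint _),
    integral_cyclic_four hK (hint _) (hint _) (hint _) (hint _)]
  simp only [gramMatrix_sinVec_cos hk, gramMatrix_sinVec_cos hl,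
    gramMatrix_sinVec_cos (show 1 ≤ k + l by omega), Matrix.smul_mul, Matrix.mul_smul, smul_smul,
    trace_smul, smul_eq_mul, trace_cosCoeffMatrix_mul_mul hk hl, trace_cosCoeffMatrix_pow_four hk,
    alph]
  push_cast
  constructor <;> field_simp <;> ring

/-- Triple and quadruple integral identities for the `SO(2N+1)` kernel: for `k, ℓ ≥ 1`,
`(1/π³) ∫∫∫ K(x,y)K(y,z)K(z,x) cos(kx)cos(ℓy)cos((k+ℓ)z)
  = (N−k−ℓ)⁺/4 + (α(k+ℓ,ℓ,k+ℓ) + α(k+ℓ,k,k+ℓ))/8`, and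
`(1/π⁴) ∫∫∫∫ K(x,y)K(y,z)K(z,w)K(w,x) cos(kx)cos(ky)cos(kz)cos(kw)
  = (N−k)⁺/4 + (2N−k)⁺/16`. -/
theorem kernel_triple_quadruple_integrals_SO_odd (N : ℕ) (hN : 1 ≤ N) :
    ∀ k l : ℕ, 1 ≤ k → 1 ≤ l →
      ((1 / Real.pi ^ 3) * ∫ x in (0:ℝ)..Real.pi, ∫ y in (0:ℝ)..Real.pi,
          ∫ z in (0:ℝ)..Real.pi,
          K N x y * K N y z * K N z x
            * Real.cos ((k : ℝ) * x) * Real.cos ((l : ℝ) * y)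
            * Real.cos (((k : ℝ) + (l : ℝ)) * z)
        = max ((N : ℝ) - (k : ℝ) - (l : ℝ)) 0 / 4
          + (alph N ((k : ℤ) + (l : ℤ)) (l : ℤ) ((k : ℤ) + (l : ℤ))
            + alph N ((k : ℤ) + (l : ℤ)) (k : ℤ) ((k : ℤ) + (l : ℤ))) / 8) ∧
      ((1 / Real.pi ^ 4) * ∫ x in (0:ℝ)..Real.pi, ∫ y in (0:ℝ)..Real.pi,
          ∫ z in (0:ℝ)..Real.pi, ∫ w in (0:ℝ)..Real.pi,
          K N x y * K N y z * K N z w * K N w x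
            * Real.cos ((k : ℝ) * x) * Real.cos ((k : ℝ) * y)
            * Real.cos ((k : ℝ) * z) * Real.cos ((k : ℝ) * w)
        = max ((N : ℝ) - (k : ℝ)) 0 / 4 + max (2 * (N : ℝ) - (k : ℝ)) 0 / 16) :=
  kernel_triple_quadruple_integrals_SO_odd_general N
end
end

section
/- Let X_k, Y_k (k ≥ 1) be independent identically distributed standard real Gaussian random variables and let ξ be the almost-sure limit of the series Σ_{k≥1} (X_k² + Y_k² − 2)/k. Then for every t ∈ ℝ, the characteristic function of ξ satisfies E[exp(i t ξ)] = Γ(1 − 2it) · exp(−2γ i t), where Γ is the complex Gamma function and γ is the Euler–Mascheroni constant. -/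
/-!
Each `X_k² + Y_k²` is a χ² variable with two degrees of freedom, with characteristic function
`u ↦ (1 - 2iu)⁻¹`, so by independence the `n`-th partial sum of the series has characteristic
function `∏_{k ≤ n} e^{-2it/k} (1 - 2it/k)⁻¹`. Dominated convergence turns the almost sure
convergence of the partial sums into convergence of these products to `E[exp(itξ)]`, and by
Euler's limit formula for `Γ` (Weierstrass's product) they converge to `Γ(1 - 2it) e^{-2γit}`.
-/

open MeasureTheory ProbabilityTheory Filter Finset Complex
open scoped Topology

noncomputable section

namespace Complex

lemma prod_exp_div_mul_inv_one_add_div_eq_GammaSeq (z : ℂ) (hz : ∀ m : ℕ, 1 + z ≠ -m) {n : ℕ}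
    (hn : n ≠ 0) :
    ∏ k ∈ range n, cexp (z / (k + 1)) * (1 + z / (k + 1))⁻¹ =
      GammaSeq (1 + z) n * ((1 + z + n) / n) * cexp (z * ((harmonic n : ℝ) - Real.log n)) := by
  have hpole (k : ℕ) : 1 + z + k ≠ 0 := fun h ↦ hz k (eq_neg_of_add_eq_zero_left h)
  have hn' : (n : ℂ) ≠ 0 := Nat.cast_ne_zero.2 hn
  have hharmonic : ∑ k ∈ range n, z / (k + 1) = z * (harmonic n : ℝ) := by
    simp [harmonic, Finset.mul_sum, div_eq_mul_inv, Rat.cast_sum]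
  have hfactor (k : ℕ) : (1 + z / (k + 1))⁻¹ = (k + 1) / (1 + z + k) := by
    rw [← inv_div]
    field_simp
    ring
  have hpow : (n : ℂ) ^ (1 + z) = n * cexp (z * Real.log n) := by
    rw [cpow_add _ _ hn', cpow_one, cpow_def_of_ne_zero hn', ← natCast_log, mul_comm _ z,
      mul_comm]
  simp_rw [prod_mul_distrib, ← exp_sum, hharmonic, hfactor]
  rw [prod_div_distrib, GammaSeq, prod_range_succ, hpow, ← prod_range_add_one_eq_factorial,
    mul_sub, exp_sub]
  push_cast
  field_simp [hpole n]

lemma tendsto_prod_exp_div_mul_inv_one_add_div (z : ℂ) (hz : ∀ m : ℕ, 1 + z ≠ -m) :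
    Tendsto (fun n ↦ ∏ k ∈ range n, cexp (z / (k + 1)) * (1 + z / (k + 1))⁻¹) atTop
      (𝓝 (Gamma (1 + z) * cexp (Real.eulerMascheroniConstant * z))) := by
  have hratio : Tendsto (fun n : ℕ ↦ (1 + z + n) / (n : ℂ)) atTop (𝓝 1) := by
    have := (tendsto_inv_atTop_nhds_zero_nat (𝕜 := ℂ)).const_mul (1 + z) |>.add_const 1
    rw [mul_zero, zero_add] at this
    refine this.congr' ?_
    filter_upwards [eventually_ne_atTop 0] with n hn
    field_simp [Nat.cast_ne_zero.2 hn]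
  have hexp : Tendsto (fun n : ℕ ↦ cexp (z * ((harmonic n : ℝ) - Real.log n))) atTop
      (𝓝 (cexp (Real.eulerMascheroniConstant * z))) := by
    have := ((continuous_ofReal.tendsto _).comp Real.tendsto_harmonic_sub_log).const_mul z
    rw [mul_comm _ z]
    simpa only [Function.comp_def, ofReal_sub] using this.cexp
  have := ((GammaSeq_tendsto_Gamma (1 + z)).mul hratio).mul hexp
  rw [mul_one] at this
  refine this.congr' ?_
  filter_upwards [eventually_ne_atTop 0] with n hn
  exact (prod_exp_div_mul_inv_one_add_div_eq_GammaSeq z hz hn).symm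

end Complex

namespace ProbabilityTheory

variable {Ω : Type*} [MeasurableSpace Ω] {P : Measure Ω}

lemma iIndepFun.curry {ι κ 𝓧 : Type*} [Countable ι] [Countable κ] [MeasurableSpace 𝓧]
    {X : ι × κ → Ω → 𝓧} (mX : ∀ p, AEMeasurable (X p) P) (h : iIndepFun X P) :
    iIndepFun (fun i ω j ↦ X (i, j) ω) P := by
  have := h.isProbabilityMeasure
  have _ p := Measure.isProbabilityMeasure_map (mX p)
  have mXrow i : AEMeasurable (fun ω j ↦ X (i, j) ω) P := aemeasurable_pi_iff.2 fun j ↦ mX (i, j)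
  have hrow i : P.map (fun ω j ↦ X (i, j) ω) = Measure.infinitePi fun j ↦ P.map (X (i, j)) :=
    (h.precomp (Prod.mk_right_injective i)).map_fun_eq_infinitePi_map₀' fun j ↦ mX (i, j)
  rw [iIndepFun_iff_map_fun_eq_infinitePi_map₀' mXrow]
  simp_rw [hrow]
  rw [← Measure.infinitePi_map_curry (fun i j ↦ P.map (X (i, j))),
    ← h.map_fun_eq_infinitePi_map₀' mX, AEMeasurable.map_map_of_aemeasurable (by fun_prop)
      (aemeasurable_pi_iff.2 mX)]
  rfl

lemma sq_charFun_gaussianReal_map_sq (u : ℝ) :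
    charFun ((gaussianReal 0 1).map (· ^ 2)) u ^ 2 = (1 - 2 * u * I)⁻¹ := by
  have hb : 0 < (1 / 2 - u * I).re := by simp
  have hdensity (x : ℝ) : gaussianPDFReal 0 1 x • cexp (u * (x ^ 2 : ℝ) * I) =
      (√(2 * Real.pi) : ℂ)⁻¹ * cexp (-(1 / 2 - u * I) * x ^ 2) := by
    simp only [gaussianPDFReal, NNReal.coe_one, mul_one, sub_zero, Complex.real_smul]
    push_cast
    rw [mul_assoc, ← Complex.exp_add]
    ring_nf
  rw [charFun_apply_real, integral_map (by fun_prop) (by fun_prop),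
    integral_gaussianReal_eq_integral_smul one_ne_zero]
  simp_rw [hdensity]
  rw [integral_const_mul, mul_pow, integral_gaussian_sq_complex hb, inv_pow,
    ← Complex.ofReal_pow, Real.sq_sqrt (by positivity)]
  push_cast
  field_simp

lemma IndepFun.charFun_map_sq_add_sq_sub_two [IsProbabilityMeasure P] {X Y : Ω → ℝ}
    (hXY : IndepFun X Y P) (hX : P.map X = gaussianReal 0 1) (hY : P.map Y = gaussianReal 0 1)
    (u : ℝ) :
    charFun (P.map fun ω ↦ X ω ^ 2 + Y ω ^ 2 - 2) u = cexp (-2 * u * I) * (1 - 2 * u * I)⁻¹ := by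
  have mX : AEMeasurable X P := aemeasurable_of_map_neZero (by rw [hX]; infer_instance)
  have mY : AEMeasurable Y P := aemeasurable_of_map_neZero (by rw [hY]; infer_instance)
  have hsq {Z : Ω → ℝ} (mZ : AEMeasurable Z P) (hZ : P.map Z = gaussianReal 0 1) :
      P.map (fun ω ↦ Z ω ^ 2) = (gaussianReal 0 1).map (· ^ 2) := by
    rw [← hZ, AEMeasurable.map_map_of_aemeasurable (by fun_prop) mZ]
    rfl
  have hsum : charFun (P.map fun ω ↦ X ω ^ 2 + Y ω ^ 2) u = (1 - 2 * u * I)⁻¹ := by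
    have hind : IndepFun (fun ω ↦ X ω ^ 2) (fun ω ↦ Y ω ^ 2) P :=
      hXY.comp (measurable_id.pow_const 2) (measurable_id.pow_const 2)
    rw [hind.charFun_map_fun_add_eq_mul (by fun_prop) (by fun_prop), Pi.mul_apply, hsq mX hX,
      hsq mY hY, ← sq, sq_charFun_gaussianReal_map_sq]
  have hshift : (fun ω ↦ X ω ^ 2 + Y ω ^ 2 - 2) = (· + (-2 : ℝ)) ∘ fun ω ↦ X ω ^ 2 + Y ω ^ 2 := by
    ext; simp [sub_eq_add_neg]
  rw [hshift, ← AEMeasurable.map_map_of_aemeasurable (by fun_prop) (by fun_prop),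
    charFun_map_add_const, hsum, Real.inner_apply, mul_comm]
  push_cast
  ring_nf

lemma tendsto_integral_cexp_of_ae_tendsto [IsFiniteMeasure P] {S : ℕ → Ω → ℝ} {ξ : Ω → ℝ}
    (hS : ∀ n, AEMeasurable (S n) P) (h : ∀ᵐ ω ∂P, Tendsto (S · ω) atTop (𝓝 (ξ ω))) (t : ℝ) :
    Tendsto (fun n ↦ ∫ ω, cexp (t * S n ω * I) ∂P) atTop (𝓝 (∫ ω, cexp (t * ξ ω * I) ∂P)) := by
  refine tendsto_integral_of_dominated_convergence (fun _ ↦ 1) (fun n ↦ by fun_prop)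
    (integrable_const 1) (fun n ↦ ae_of_all _ fun ω ↦ ?_) ?_
  · rw [← ofReal_mul, norm_exp_ofReal_mul_I]
  · filter_upwards [h] with ω hω
    exact (((continuous_ofReal.tendsto _).comp hω).const_mul (t : ℂ) |>.mul_const I).cexp

end ProbabilityTheory

theorem xi_unitary_charFun_general
    {Ω : Type*} [MeasurableSpace Ω] (P : Measure Ω) [IsProbabilityMeasure P]
    (X Y : ℕ → Ω → ℝ)
    (hindep : iIndepFun
      (fun p : ℕ × Bool => if p.2 then X p.1 else Y p.1) P)
    (hX : ∀ k, Measure.map (X k) P = gaussianReal 0 1)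
    (hY : ∀ k, Measure.map (Y k) P = gaussianReal 0 1)
    (ξ : Ω → ℝ)
    (hlim : ∀ᵐ ω ∂P, Tendsto
      (fun n => ∑ k ∈ Finset.range n, (X (k + 1) ω ^ 2 + Y (k + 1) ω ^ 2 - 2) / ((k : ℝ) + 1))
      atTop (nhds (ξ ω))) :
    ∀ t : ℝ, ∫ ω, Complex.exp (Complex.I * (t : ℂ) * (ξ ω : ℂ)) ∂P
      = Complex.Gamma (1 - 2 * Complex.I * (t : ℂ))
        * Complex.exp (-2 * (Real.eulerMascheroniConstant : ℂ) * Complex.I * (t : ℂ)) := by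
  intro t
  have mX k : AEMeasurable (X k) P := aemeasurable_of_map_neZero (by rw [hX k]; infer_instance)
  have mY k : AEMeasurable (Y k) P := aemeasurable_of_map_neZero (by rw [hY k]; infer_instance)
  set Z : ℕ → Ω → ℝ := fun k ω ↦ (X (k + 1) ω ^ 2 + Y (k + 1) ω ^ 2 - 2) / ((k : ℝ) + 1)
  have mZ k : AEMeasurable (Z k) P := by fun_prop
  have hZ : iIndepFun Z P := by
    have hpairs := hindep.curry fun p ↦ by cases p.2 <;> simp [mX, mY]
    exact (hpairs.precomp Nat.succ_injective).comp
      (fun k v ↦ (v true ^ 2 + v false ^ 2 - 2) / ((k : ℝ) + 1)) fun k ↦ by fun_prop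
  have hZchar k : charFun (P.map (Z k)) t =
      cexp (-2 * t * I / (k + 1)) * (1 + -2 * t * I / (k + 1))⁻¹ := by
    have hXY : IndepFun (X (k + 1)) (Y (k + 1)) P :=
      hindep.indepFun (i := (k + 1, true)) (j := (k + 1, false)) (by simp)
    have hZk : Z k = fun ω ↦ ((k : ℝ) + 1)⁻¹ * (X (k + 1) ω ^ 2 + Y (k + 1) ω ^ 2 - 2) := by
      ext ω; exact div_eq_inv_mul _ _
    rw [hZk, charFun_map_mul_comp (by fun_prop),
      hXY.charFun_map_sq_add_sq_sub_two (hX (k + 1)) (hY (k + 1))]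
    push_cast
    ring_nf
  have hpartial n : ∫ ω, cexp (t * (∑ k ∈ range n, Z k ω : ℝ) * I) ∂P =
      ∏ k ∈ range n, cexp (-2 * t * I / (k + 1)) * (1 + -2 * t * I / (k + 1))⁻¹ := by
    rw [← integral_map (f := fun x : ℝ ↦ cexp (t * x * I)) (by fun_prop) (by fun_prop),
      ← charFun_apply_real, (hZ.restrict _).charFun_map_fun_finsetSum_eq_prod fun k _ ↦ mZ k,
      prod_apply]
    exact prod_congr rfl fun k _ ↦ hZchar k
  have hlimit :=
    (tendsto_integral_cexp_of_ae_tendsto (fun n ↦ by fun_prop) hlim t).congr hpartial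
  have hpole (m : ℕ) : 1 + -2 * t * I ≠ -m := fun h ↦ by
    have hre : (1 : ℝ) = -m := by simpa using congrArg re h
    linarith [m.cast_nonneg (α := ℝ)]
  convert tendsto_nhds_unique hlimit (tendsto_prod_exp_div_mul_inv_one_add_div _ hpole) using 1
  · simp_rw [mul_comm I, mul_right_comm _ I]
  · ring_nf

/-- Let `X_k, Y_k` be i.i.d. standard Gaussians and let `ξ` be the a.s. limit of
`Σ_{k≥1} (X_k² + Y_k² − 2)/k`. Then for every `t ∈ ℝ`,
`E[exp(itξ)] = Γ(1 − 2it) · exp(−2γit)`. -/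
theorem xi_unitary_charFun
    {Ω : Type*} [MeasurableSpace Ω] (P : Measure Ω) [IsProbabilityMeasure P]
    (X Y : ℕ → Ω → ℝ)
    (hindep : iIndepFun
      (fun p : ℕ × Bool => if p.2 then X p.1 else Y p.1) P)
    (hX : ∀ k, Measure.map (X k) P = gaussianReal 0 1)
    (hY : ∀ k, Measure.map (Y k) P = gaussianReal 0 1)
    (ξ : Ω → ℝ) (hmeas : Measurable ξ)
    (hlim : ∀ᵐ ω ∂P, Tendsto
      (fun n => ∑ k ∈ Finset.range n, (X (k + 1) ω ^ 2 + Y (k + 1) ω ^ 2 - 2) / ((k : ℝ) + 1))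
      atTop (nhds (ξ ω))) :
    ∀ t : ℝ, ∫ ω, Complex.exp (Complex.I * (t : ℂ) * (ξ ω : ℂ)) ∂P
      = Complex.Gamma (1 - 2 * Complex.I * (t : ℂ))
        * Complex.exp (-2 * (Real.eulerMascheroniConstant : ℂ) * Complex.I * (t : ℂ)) :=
  xi_unitary_charFun_general P X Y hindep hX hY ξ hlim
end
end
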